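/- Every partial H-comodule algebra (A, ρ̄) has an enveloping coaction (globalization). Concretely, regard A ⊗ H as an H-comodule algebra with the coaction δ = I ⊗ Δ, and let B be the smallest H-subcomodule subalgebra of A ⊗ H containing ρ̄(A); then ρ̄: A → B is an injective algebra homomorphism, and (B, δ restricted to B) together with θ = ρ̄ is an enveloping coaction of A. -/

import Mathlib

/-!
STATEMENT 9: Every partial `H`-comodule algebra `(A, ρ̄)` has an enveloping coaction.
Concretely, regard `A ⊗ H` as an `H`-comodule algebra with coaction `δ = I ⊗ Δ`, and let
`B` be the smallest `H`-subcomodule subalgebra of `A ⊗ H` containing `ρ̄(A)`; then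
`ρ̄ : A → B` is an injective algebra homomorphism and `(B, δ|B)` together with `θ = ρ̄`
is an enveloping coaction of `A`.
-/

open TensorProduct

/-- The axioms of a (right) partial coaction `ρ : A → A ⊗ H` of a Hopf algebra `H` on a
unital algebra `A`. -/
structure IsPartialCoaction (k : Type*) [Field k] (H A : Type*) [Ring H] [HopfAlgebra k H]
    [Ring A] [Algebra k A] (ρ : A →ₗ[k] A ⊗[k] H) : Prop where
  map_mul : ∀ a b : A, ρ (a * b) = ρ a * ρ b
  counit_id : ∀ a : A,
    (TensorProduct.rid k A) ((LinearMap.lTensor A Coalgebra.counit) (ρ a)) = a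
  coassoc : ∀ a : A,
    (LinearMap.rTensor H ρ) (ρ a) =
      (ρ 1 ⊗ₜ[k] (1 : H)) *
        ((TensorProduct.assoc k A H H).symm ((LinearMap.lTensor A Coalgebra.comul) (ρ a)))

noncomputable section

variable (k : Type*) [Field k] (H A : Type*) [Ring H] [HopfAlgebra k H] [Ring A] [Algebra k A]

/-- The coaction `δ = I ⊗ Δ` making `A ⊗ H` an `H`-comodule algebra. -/
def trivialCoaction : A ⊗[k] H →ₗ[k] (A ⊗[k] H) ⊗[k] H :=
  (TensorProduct.assoc k A H H).symm.toLinearMap ∘ₗ LinearMap.lTensor A Coalgebra.comul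

/-- A non-unital subalgebra `W` of the `H`-comodule algebra `(A ⊗ H, δ = I ⊗ Δ)` is an
`H`-subcomodule subalgebra when `δ(W) ⊆ W ⊗ H`. -/
def IsSubcomoduleSubalg (W : NonUnitalSubalgebra k (A ⊗[k] H)) : Prop :=
  ∀ w ∈ W, trivialCoaction k H A w ∈
    LinearMap.range (LinearMap.rTensor H (Submodule.subtype W.toSubmodule))

/-!
Let `W ⊆ A ⊗ H` be the subalgebra generated by the elements `(I ⊗ (f ⇀)) ρ(a)` with `f ∈ H*`,
where `f ⇀ h = Σ h₁ f(h₂)`. The slices of `δ = I ⊗ Δ` are `(I ⊗ f) δ = I ⊗ (f ⇀)` and the hit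
maps compose as `(f ⇀) ∘ (g ⇀) = (f ∘ (g ⇀)) ⇀`, so all slices of `δ(w)` lie in `W` for a
generator `w`; as `H` is free, `δ(W) ⊆ W ⊗ H`. Hence `W` is an `H`-subcomodule subalgebra
containing `ρ(A)` and `B ⊆ W` by minimality. The coassociativity axiom, multiplied on the left
by `ρ(a) ⊗ 1` and sliced by `f`, gives `ρ(a) (I ⊗ (f ⇀)) ρ(b) = ρ(a (I ⊗ f) ρ(b))`: the image
`ρ(A)` absorbs the generators of `W` on the right, hence all of `W ⊇ B`. Injectivity of `ρ`
comes from the counit axiom.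
-/

section Slice

open LinearMap

variable {R M N P : Type*} [CommSemiring R] [AddCommMonoid M] [Module R M]
  [AddCommMonoid N] [Module R N] [AddCommMonoid P] [Module R P]

def sliceRight (f : N →ₗ[R] R) : M ⊗[R] N →ₗ[R] M :=
  (TensorProduct.rid R M).toLinearMap ∘ₗ f.lTensor M

@[simp]
lemma sliceRight_tmul (f : N →ₗ[R] R) (m : M) (n : N) :
    sliceRight f (m ⊗ₜ[R] n) = f n • m := by
  simp [sliceRight]

lemma comp_sliceRight {M' : Type*} [AddCommMonoid M'] [Module R M'] (f : N →ₗ[R] R)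
    (φ : M →ₗ[R] M') : φ ∘ₗ sliceRight f = sliceRight f ∘ₗ φ.rTensor N :=
  TensorProduct.ext' fun m n ↦ by simp

lemma sliceRight_comp (f : N →ₗ[R] R) (ψ : P →ₗ[R] N) :
    sliceRight (M := M) (f ∘ₗ ψ) = sliceRight f ∘ₗ ψ.lTensor M :=
  TensorProduct.ext' fun m p ↦ by simp

lemma sliceRight_comp_assoc_symm (g : P →ₗ[R] R) :
    sliceRight g ∘ₗ (TensorProduct.assoc R M N P).symm.toLinearMap =
      (sliceRight g).lTensor M := by
  refine TensorProduct.ext' fun m w ↦ ?_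
  induction w using TensorProduct.induction_on with
  | zero => simp
  | tmul n p => simp [tmul_smul, smul_tmul']
  | add u v hu hv => simp only [tmul_add, map_add, hu, hv]

lemma mem_range_rTensor_subtype_of_forall_sliceRight_mem [Module.Free R N] (W : Submodule R M)
    {u : M ⊗[R] N} (hu : ∀ f : N →ₗ[R] R, sliceRight f u ∈ W) :
    u ∈ range (W.subtype.rTensor N) := by
  classical
  set b := Module.Free.chooseBasis R N
  set e := TensorProduct.equivFinsuppOfBasisRight (M := M) b
  have hcoeff (i) : e u i ∈ W := by
    -- the coefficients of `u` in a basis of `N` are slices of `u`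
    rw [TensorProduct.equivFinsuppOfBasisRight_apply]
    exact hu (b.coord i)
  refine ⟨(e u).support.sum fun i ↦ (⟨e u i, hcoeff i⟩ : W) ⊗ₜ[R] b i, ?_⟩
  conv_rhs => rw [← e.symm_apply_apply u, TensorProduct.equivFinsuppOfBasisRight_symm_apply]
  simp [Finsupp.sum]

end Slice

section Hit

open LinearMap Coalgebra

variable {R C : Type*} [CommSemiring R] [AddCommMonoid C] [Module R C] [Coalgebra R C]

/-- The hit action `f ⇀ c = Σ c₁ f(c₂)` of the dual algebra. -/
def hit (f : C →ₗ[R] R) : C →ₗ[R] C := sliceRight f ∘ₗ comul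

lemma hit_counit : hit (counit : C →ₗ[R] R) = LinearMap.id :=
  LinearMap.ext fun c ↦ by simp [hit, sliceRight]

lemma hit_comp_hit (f g : C →ₗ[R] R) : hit f ∘ₗ hit g = hit (f ∘ₗ hit g) := by
  calc hit f ∘ₗ hit g
      = sliceRight f ∘ₗ (comul ∘ₗ sliceRight g) ∘ₗ comul := rfl
    _ = sliceRight f ∘ₗ sliceRight g ∘ₗ (TensorProduct.assoc R C C C).symm.toLinearMap ∘ₗ
          comul.lTensor C ∘ₗ comul := by
        rw [comp_sliceRight, comp_assoc, coassoc_symm]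
    _ = sliceRight f ∘ₗ ((sliceRight g).lTensor C ∘ₗ comul.lTensor C) ∘ₗ comul := by
        rw [← sliceRight_comp_assoc_symm]; rfl
    _ = hit (f ∘ₗ hit g) := by
        rw [← lTensor_comp, hit, sliceRight_comp]; rfl

end Hit

section TensorAlgebra

open LinearMap

variable {R S T : Type*} [CommSemiring R] [Semiring S] [Algebra R S] [Semiring T] [Algebra R T]

lemma mul_sliceRight (f : T →ₗ[R] R) (z : S) (u : S ⊗[R] T) :
    z * sliceRight f u = sliceRight f ((z ⊗ₜ[R] (1 : T)) * u) := by
  induction u using TensorProduct.induction_on with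
  | zero => simp
  | tmul y t => simp [Algebra.TensorProduct.tmul_mul_tmul]
  | add u v hu hv => simp only [map_add, mul_add, hu, hv]

lemma NonUnitalSubalgebra.mul_mem_range_rTensor_subtype (W : NonUnitalSubalgebra R S)
    {u v : S ⊗[R] T} (hu : u ∈ range (W.toSubmodule.subtype.rTensor T))
    (hv : v ∈ range (W.toSubmodule.subtype.rTensor T)) :
    u * v ∈ range (W.toSubmodule.subtype.rTensor T) := by
  obtain ⟨p, rfl⟩ := hu
  obtain ⟨q, rfl⟩ := hv
  induction p using TensorProduct.induction_on with
  | zero => simp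
  | add p₁ p₂ h₁ h₂ => rw [map_add, add_mul]; exact add_mem h₁ h₂
  | tmul w t =>
    induction q using TensorProduct.induction_on with
    | zero => simp
    | add q₁ q₂ h₁ h₂ => rw [map_add, mul_add]; exact add_mem h₁ h₂
    | tmul w' t' =>
      exact ⟨(⟨w * w', W.mul_mem w.2 w'.2⟩ : W.toSubmodule) ⊗ₜ[R] (t * t'),
        by simp [Algebra.TensorProduct.tmul_mul_tmul]⟩

end TensorAlgebra

section Comodule

open LinearMap

lemma trivialCoaction_eq_algHom :
    trivialCoaction k H A = ((Algebra.TensorProduct.assoc k k k A H H).symm.toAlgHom.comp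
      (Algebra.TensorProduct.map (AlgHom.id k A) (Bialgebra.comulAlgHom k H))).toLinearMap :=
  TensorProduct.ext' fun _ _ ↦ rfl

lemma trivialCoaction_mul (x y : A ⊗[k] H) :
    trivialCoaction k H A (x * y) = trivialCoaction k H A x * trivialCoaction k H A y := by
  simp only [trivialCoaction_eq_algHom, AlgHom.toLinearMap_apply, map_mul]

lemma sliceRight_comp_trivialCoaction (f : H →ₗ[k] k) :
    sliceRight f ∘ₗ trivialCoaction k H A = (hit f).lTensor A := by
  rw [trivialCoaction, ← comp_assoc, sliceRight_comp_assoc_symm, ← lTensor_comp]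
  rfl

variable {k H A}

def hitAdjoin (ρ : A →ₗ[k] A ⊗[k] H) : NonUnitalSubalgebra k (A ⊗[k] H) :=
  NonUnitalAlgebra.adjoin k (Set.range fun p : (H →ₗ[k] k) × A ↦ (hit p.1).lTensor A (ρ p.2))

lemma range_subset_hitAdjoin (ρ : A →ₗ[k] A ⊗[k] H) :
    Set.range ρ ⊆ hitAdjoin ρ := by
  rintro _ ⟨a, rfl⟩
  refine NonUnitalAlgebra.subset_adjoin k ⟨(Coalgebra.counit, a), ?_⟩
  simp [hit_counit]

lemma isSubcomoduleSubalg_hitAdjoin (ρ : A →ₗ[k] A ⊗[k] H) :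
    IsSubcomoduleSubalg k H A (hitAdjoin ρ) := by
  intro w hw
  induction hw using NonUnitalAlgebra.adjoin_induction with
  | mem x hx =>
    obtain ⟨⟨g, a⟩, rfl⟩ := hx
    refine mem_range_rTensor_subtype_of_forall_sliceRight_mem _ fun f ↦ ?_
    rw [← comp_apply (sliceRight f), sliceRight_comp_trivialCoaction, ← comp_apply,
      ← lTensor_comp, hit_comp_hit]
    exact NonUnitalAlgebra.subset_adjoin k ⟨(f ∘ₗ hit g, a), rfl⟩
  | add x y _ _ hx hy => rw [map_add]; exact add_mem hx hy
  | zero => rw [map_zero]; exact zero_mem _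
  | mul x y _ _ hx hy =>
    rw [trivialCoaction_mul]
    exact NonUnitalSubalgebra.mul_mem_range_rTensor_subtype _ hx hy
  | smul r x _ hx => rw [map_smul]; exact Submodule.smul_mem _ _ hx

namespace IsPartialCoaction

variable {ρ : A →ₗ[k] A ⊗[k] H}

lemma injective (hρ : IsPartialCoaction k H A ρ) : Function.Injective ρ :=
  Function.LeftInverse.injective
    (g := fun x ↦ TensorProduct.rid k A (Coalgebra.counit.lTensor A x)) hρ.counit_id

lemma map_one_mul (hρ : IsPartialCoaction k H A ρ) (a : A) : ρ 1 * ρ a = ρ a := by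
  rw [← hρ.map_mul, one_mul]

lemma mul_map_one (hρ : IsPartialCoaction k H A ρ) (a : A) : ρ a * ρ 1 = ρ a := by
  rw [← hρ.map_mul, mul_one]

lemma coassoc_trivialCoaction (hρ : IsPartialCoaction k H A ρ) (a : A) :
    ρ.rTensor H (ρ a) = (ρ 1 ⊗ₜ[k] (1 : H)) * trivialCoaction k H A (ρ a) :=
  hρ.coassoc a

lemma mul_lTensor_hit (hρ : IsPartialCoaction k H A ρ) (f : H →ₗ[k] k) (a b : A) :
    ρ a * (hit f).lTensor A (ρ b) = ρ (a * sliceRight f (ρ b)) := by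
  calc ρ a * (hit f).lTensor A (ρ b)
      = sliceRight f ((ρ a ⊗ₜ[k] (1 : H)) * trivialCoaction k H A (ρ b)) := by
        rw [← sliceRight_comp_trivialCoaction, comp_apply, mul_sliceRight]
    _ = sliceRight f ((ρ a ⊗ₜ[k] (1 : H)) * ρ.rTensor H (ρ b)) := by
        rw [hρ.coassoc_trivialCoaction, ← mul_assoc, Algebra.TensorProduct.tmul_mul_tmul, mul_one,
          hρ.mul_map_one]
    _ = ρ (a * sliceRight f (ρ b)) := by
        rw [← mul_sliceRight, ← comp_apply (sliceRight f), ← comp_sliceRight, comp_apply,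
          hρ.map_mul]

lemma mul_mem_range_of_mem_hitAdjoin (hρ : IsPartialCoaction k H A ρ) {x : A ⊗[k] H}
    (hx : x ∈ hitAdjoin ρ) (a : A) :
    ρ a * x ∈ Set.range ρ := by
  induction hx using NonUnitalAlgebra.adjoin_induction generalizing a with
  | mem x hx =>
    obtain ⟨⟨f, b⟩, rfl⟩ := hx
    exact ⟨_, (hρ.mul_lTensor_hit f a b).symm⟩
  | add x y _ _ hx hy =>
    obtain ⟨c, hc⟩ := hx a
    obtain ⟨d, hd⟩ := hy a
    exact ⟨c + d, by rw [map_add, hc, hd, mul_add]⟩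
  | zero => exact ⟨0, by rw [map_zero, mul_zero]⟩
  | mul x y _ _ hx hy =>
    obtain ⟨c, hc⟩ := hx a
    obtain ⟨d, hd⟩ := hy c
    exact ⟨d, by rw [hd, hc, mul_assoc]⟩
  | smul r x _ hx =>
    obtain ⟨c, hc⟩ := hx a
    exact ⟨r • c, by rw [map_smul, hc, mul_smul_comm]⟩

end IsPartialCoaction

end Comodule

theorem enveloping_coaction_exists
    (ρ : A →ₗ[k] A ⊗[k] H) (hρ : IsPartialCoaction k H A ρ)
    (B : NonUnitalSubalgebra k (A ⊗[k] H))
    -- `B` is the smallest `H`-subcomodule subalgebra of `A ⊗ H` containing `ρ̄(A)`: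
    (hBmin : ∀ W : NonUnitalSubalgebra k (A ⊗[k] H),
      IsSubcomoduleSubalg k H A W → Set.range ρ ⊆ (W : Set (A ⊗[k] H)) → B ≤ W) :
    -- `θ = ρ̄` is injective (it is an algebra map by the first partial coaction axiom)
    Function.Injective ρ ∧
    -- `θ(A)` is a right ideal of `B` with unity `θ(1_A)`
    (∀ (a : A), ∀ x ∈ B, ρ a * x ∈ Set.range ρ) ∧
    (∀ a : A, ρ 1 * ρ a = ρ a ∧ ρ a * ρ 1 = ρ a) ∧
    -- `B` is generated by `θ(A)` as an `H`-comodule algebra: the only `H`-subcomodule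
    -- subalgebra of `B` containing `θ(A)` is `B` itself
    (∀ W : NonUnitalSubalgebra k (A ⊗[k] H), W ≤ B → IsSubcomoduleSubalg k H A W →
      Set.range ρ ⊆ (W : Set (A ⊗[k] H)) → W = B) ∧
    -- compatibility: `(θ ⊗ I) ρ̄(a) = (θ(1_A) ⊗ 1_H) δ(θ(a))`
    (∀ a : A,
      (LinearMap.rTensor H ρ) (ρ a) =
        (ρ 1 ⊗ₜ[k] (1 : H)) * trivialCoaction k H A (ρ a)) := by
  have hB : B ≤ hitAdjoin ρ :=
    hBmin _ (isSubcomoduleSubalg_hitAdjoin ρ) (range_subset_hitAdjoin ρ)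
  exact ⟨hρ.injective, fun a x hx ↦ hρ.mul_mem_range_of_mem_hitAdjoin (hB hx) a,
    fun a ↦ ⟨hρ.map_one_mul a, hρ.mul_map_one a⟩,
    fun W hWB hW hρW ↦ le_antisymm hWB (hBmin W hW hρW), hρ.coassoc_trivialCoaction⟩

end
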